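/- (Lemma 2.1(iii), vanishing steps) The successive differences vanish: lim_{k→∞} ‖x^{k+1} − x^k‖₂ = 0. -/

import Mathlib

open Filter
open scoped BigOperators InnerProductSpace

noncomputable section

/-- Real n-dimensional Euclidean space. -/
abbrev Vec (n : ℕ) := EuclideanSpace ℝ (Fin n)

/-- The smoothed objective `F(x, ε) = f(x) + λ ∑ᵢ (|xᵢ| + εᵢ)^p`. -/
def Fobj (n : ℕ) (p lam : ℝ) (f : Vec n → ℝ) (z : Vec n) (ε : Fin n → ℝ) : ℝ :=
  f z + lam * ∑ i, (|z i| + ε i) ^ p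

/-- The merit function `ψ(x, y, ε) = F(x, ε) + (β/2)‖x − y‖²`. -/
def psiObj (n : ℕ) (p lam β : ℝ) (f : Vec n → ℝ) (z y : Vec n) (ε : Fin n → ℝ) : ℝ :=
  Fobj n p lam f z ε + β / 2 * ‖z - y‖ ^ 2

/-- The weighted-ℓ₁ subproblem objective at iteration `k`:
`⟨∇f(yₖ), z⟩ + (β/2)‖z − yₖ‖² + λ ∑ᵢ wᵢᵏ |zᵢ|` with `wᵢᵏ = p(|xᵢᵏ| + εᵢᵏ)^{p−1}`. -/
def subObj (n : ℕ) (p lam β : ℝ) (f : Vec n → ℝ) (xk yk : Vec n) (εk : Fin n → ℝ)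
    (z : Vec n) : ℝ :=
  ⟪gradient f yk, z⟫_ℝ + β / 2 * ‖z - yk‖ ^ 2
    + lam * ∑ i, (p * (|xk i| + εk i) ^ (p - 1)) * |z i|

/-- All the hypotheses of the EIRL1 algorithm (Algorithm 1) together with
Assumption 2.1.  The convention `x⁻¹ = x⁰` is encoded through truncated
subtraction on ℕ (`x (k-1) = x 0` for `k = 0`). -/
structure EIRL1 (n : ℕ) (p lam β Lf μ αbar : ℝ) (f : Vec n → ℝ)
    (x y : ℕ → Vec n) (ε : ℕ → Fin n → ℝ) (α : ℕ → ℝ) : Prop where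
  hn : 1 ≤ n
  hp0 : 0 < p
  hp1 : p < 1
  hlam : 0 < lam
  hμ0 : 0 < μ
  hμ1 : μ < 1
  hLf : 0 ≤ Lf
  hβ : Lf < β
  hconv : ConvexOn ℝ Set.univ f
  hdiff : ContDiff ℝ 1 f
  hlip : ∀ a b, ‖gradient f a - gradient f b‖ ≤ Lf * ‖a - b‖
  hαbar0 : 0 ≤ αbar
  hαbar1 : αbar < 1
  hα0 : ∀ k, 0 ≤ α k
  hα1 : ∀ k, α k ≤ αbar
  hε0 : ∀ i, 0 < ε 0 i
  hεpos : ∀ k i, 0 < ε (k + 1) i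
  hεdec : ∀ k i, ε (k + 1) i ≤ μ * ε k i
  hy : ∀ k, y k = x k + α k • (x k - x (k - 1))
  hmin : ∀ k z, z ≠ x (k + 1) →
    subObj n p lam β f (x k) (y k) (ε k) (x (k + 1)) < subObj n p lam β f (x k) (y k) (ε k) z
  hlevel : Bornology.IsBounded {z : Vec n | Fobj n p lam f z 0 ≤ Fobj n p lam f (x 0) (ε 0)}

/-!
The merit values `ψ(xᵏ, xᵏ⁻¹, εᵏ)` decrease by at least `β/2 (1 - ᾱ²) ‖xᵏ - xᵏ⁻¹‖²` per step:
the subproblem is `β`-strongly convex, so its minimiser beats `xᵏ` by `β/2 ‖xᵏ⁺¹ - xᵏ‖²`; the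
descent lemma (`L_f < β`) and convexity of `f` transfer this to `F`, and the concave penalty lies
below the weighted-ℓ₁ model. Hence every iterate stays in the bounded initial level set, on which
`f` is bounded below, so the decrements are summable and the steps vanish.
-/

open Set Topology

section Smooth

variable {E : Type*} [NormedAddCommGroup E] [InnerProductSpace ℝ E] [CompleteSpace E] {f : E → ℝ}

lemma hasDerivAt_comp_add_smul {a v : E} {t : ℝ} (hf : DifferentiableAt ℝ f (a + t • v)) :
    HasDerivAt (fun s : ℝ => f (a + s • v)) ⟪gradient f (a + t • v), v⟫_ℝ t := by
  have hline : HasDerivAt (fun s : ℝ => a + s • v) v t := by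
    simpa using ((hasDerivAt_id t).smul_const v).const_add a
  exact hf.hasGradientAt.hasFDerivAt.comp_hasDerivAt t hline

lemma ConvexOn.add_inner_gradient_le (hconv : ConvexOn ℝ univ f) {a : E}
    (hf : DifferentiableAt ℝ f a) (b : E) :
    f a + ⟪gradient f a, b - a⟫_ℝ ≤ f b := by
  have hline : ConvexOn ℝ univ (fun t : ℝ => f (a + t • (b - a))) := by
    simpa [Function.comp_def, AffineMap.lineMap_apply_module', add_comm]
      using hconv.comp_affineMap (AffineMap.lineMap a b)
  have hder := hasDerivAt_comp_add_smul (t := 0) (v := b - a) (by simpa using hf)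
  have := hline.le_slope_of_hasDerivAt (mem_univ 0) (mem_univ 1) one_pos hder
  simp only [zero_smul, add_zero, slope_def_field, one_smul, add_sub_cancel] at this
  linarith

lemma le_add_inner_gradient_add_sq_of_lipschitz (hf : Differentiable ℝ f) {L : ℝ}
    (hlip : ∀ a b, ‖gradient f a - gradient f b‖ ≤ L * ‖a - b‖) (a b : E) :
    f b ≤ f a + ⟪gradient f a, b - a⟫_ℝ + L / 2 * ‖b - a‖ ^ 2 := by
  set v := b - a
  set g : ℝ → ℝ := fun t => f (a + t • v) - t * ⟪gradient f a, v⟫_ℝ - L / 2 * t ^ 2 * ‖v‖ ^ 2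
  have hg : ∀ t, HasDerivAt g
      (⟪gradient f (a + t • v), v⟫_ℝ - ⟪gradient f a, v⟫_ℝ - L * t * ‖v‖ ^ 2) t := by
    intro t
    have h := (((hasDerivAt_comp_add_smul (a := a) (v := v) (hf _)).sub ((hasDerivAt_id t).mul_const
      ⟪gradient f a, v⟫_ℝ)).sub (((hasDerivAt_pow 2 t).const_mul (L / 2)).mul_const (‖v‖ ^ 2)))
    exact h.congr_deriv (by ring)
  -- `g' ≤ 0` on `t ≥ 0` because the gradient moves by at most `L t ‖v‖` along the segment
  have hanti : AntitoneOn g (Ici 0) := by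
    refine antitoneOn_of_hasDerivWithinAt_nonpos (convex_Ici 0)
      (fun t _ => (hg t).continuousAt.continuousWithinAt) (fun t _ => (hg t).hasDerivWithinAt)
      fun t ht => ?_
    rw [interior_Ici, mem_Ioi] at ht
    have hdiff := hlip (a + t • v) a
    rw [add_sub_cancel_left, norm_smul, Real.norm_of_nonneg ht.le] at hdiff
    have := real_inner_le_norm (gradient f (a + t • v) - gradient f a) v
    rw [inner_sub_left] at this
    nlinarith [norm_nonneg v]
  have := hanti (mem_Ici.2 le_rfl) (mem_Ici.2 zero_le_one) zero_le_one
  simp only [g, one_smul, zero_smul, add_zero, v, add_sub_cancel] at this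
  linarith

end Smooth

lemma StrongConvexOn.add_sq_le_of_isMinOn {E : Type*} [NormedAddCommGroup E] [NormedSpace ℝ E]
    {s : Set E} {m : ℝ} {S : E → ℝ} {x₀ z : E} (hS : StrongConvexOn s m S)
    (hmin : IsMinOn S s x₀) (hx₀ : x₀ ∈ s) (hz : z ∈ s) :
    S x₀ + m / 2 * ‖z - x₀‖ ^ 2 ≤ S z := by
  have hseg : ∀ t ∈ Ioo (0 : ℝ) 1, (1 - t) * (m / 2 * ‖z - x₀‖ ^ 2) ≤ S z - S x₀ := by
    rintro t ⟨ht0, ht1⟩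
    have h1t : (0 : ℝ) ≤ 1 - t := by linarith
    have hconv := hS.2 hx₀ hz h1t ht0.le (by ring)
    have hle : S x₀ ≤ S ((1 - t) • x₀ + t • z) := hmin (hS.1 hx₀ hz h1t ht0.le (by ring))
    rw [norm_sub_rev] at hconv
    simp only [smul_eq_mul] at hconv
    nlinarith
  have hlim : Tendsto (fun t : ℝ => (1 - t) * (m / 2 * ‖z - x₀‖ ^ 2)) (𝓝[>] 0)
      (𝓝 ((1 - 0) * (m / 2 * ‖z - x₀‖ ^ 2))) :=
    ((continuous_const.sub continuous_id).mul continuous_const).continuousAt.tendsto.mono_left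
      nhdsWithin_le_nhds
  have := le_of_tendsto hlim (eventually_of_mem (Ioo_mem_nhdsGT one_pos) hseg)
  linarith

lemma strongConvexOn_univ_sq_norm_sub {E : Type*} [NormedAddCommGroup E] [InnerProductSpace ℝ E]
    (m : ℝ) (y : E) : StrongConvexOn univ m (fun z => m / 2 * ‖z - y‖ ^ 2) := by
  rw [strongConvexOn_iff_convex]
  have haff : ConvexOn ℝ univ (fun z => (-m) • innerₛₗ ℝ y z + m / 2 * ‖y‖ ^ 2) :=
    (((-m) • innerₛₗ ℝ y).convexOn convex_univ).add_const _
  convert haff using 2 with z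
  simp only [smul_eq_mul, innerₛₗ_apply_apply, norm_sub_sq_real, real_inner_comm y z]
  ring

lemma Real.rpow_le_rpow_add_mul_sub {p a b : ℝ} (hp0 : 0 ≤ p) (hp1 : p ≤ 1) (ha : 0 < a)
    (hb : 0 ≤ b) : b ^ p ≤ a ^ p + p * a ^ (p - 1) * (b - a) := by
  have hs : -1 ≤ (b - a) / a := by rw [le_div_iff₀ ha]; linarith
  have hb : b = a * (1 + (b - a) / a) := by field_simp; ring
  calc b ^ p = a ^ p * (1 + (b - a) / a) ^ p := by
        rw [← Real.mul_rpow ha.le (by linarith), ← hb]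
    _ ≤ a ^ p * (1 + p * ((b - a) / a)) := by
        gcongr; exact rpow_one_add_le_one_add_mul_self hs hp0 hp1
    _ = a ^ p + p * a ^ (p - 1) * (b - a) := by
        rw [Real.rpow_sub_one ha.ne']; field_simp

lemma tendsto_zero_of_add_le_of_bddBelow {H c : ℕ → ℝ} (hc : ∀ k, 0 ≤ c k)
    (hstep : ∀ k, H (k + 1) + c k ≤ H k) (hbdd : BddBelow (range H)) :
    Tendsto c atTop (𝓝 0) := by
  obtain ⟨M, hM⟩ := hbdd
  have hsum : ∀ N, ∑ k ∈ Finset.range N, c k ≤ H 0 - H N := by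
    intro N
    induction N with
    | zero => simp
    | succ N ih => rw [Finset.sum_range_succ]; linarith [hstep N]
  refine (summable_of_sum_range_le hc (c := H 0 - M) fun N => ?_).tendsto_atTop_zero
  linarith [hsum N, hM (mem_range_self N)]

lemma convexOn_univ_sum_mul_abs {n : ℕ} {w : Fin n → ℝ} (hw : ∀ i, 0 ≤ w i) :
    ConvexOn ℝ univ (fun z : Vec n => ∑ i, w i * |z i|) := by
  have hterm : ∀ i, ConvexOn ℝ univ (fun z : Vec n => w i * |z i|) := fun i =>
    (convexOn_univ_norm.comp_linearMap (EuclideanSpace.proj i : Vec n →L[ℝ] ℝ).toLinearMap).smul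
      (hw i)
  simpa only [Finset.sum_fn] using Finset.sum_induction _ (ConvexOn ℝ univ)
    (fun _ _ => ConvexOn.add) (convexOn_const 0 convex_univ) fun i _ => hterm i

lemma strongConvexOn_subObj {n : ℕ} {p lam β : ℝ} {f : Vec n → ℝ} {xk yk : Vec n}
    {εk : Fin n → ℝ} (hp : 0 ≤ p) (hlam : 0 ≤ lam) (hε : ∀ i, 0 ≤ εk i) :
    StrongConvexOn univ β (subObj n p lam β f xk yk εk) := by
  have hw : ∀ i, 0 ≤ p * (|xk i| + εk i) ^ (p - 1) := fun i =>
    mul_nonneg hp (Real.rpow_nonneg (add_nonneg (abs_nonneg _) (hε i)) _)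
  have hconv : ConvexOn ℝ univ (fun z : Vec n =>
      ⟪gradient f yk, z⟫_ℝ + lam * ∑ i, p * (|xk i| + εk i) ^ (p - 1) * |z i|) :=
    ((innerₛₗ ℝ (gradient f yk)).convexOn convex_univ).add
      ((convexOn_univ_sum_mul_abs hw).smul hlam)
  have hsplit : subObj n p lam β f xk yk εk = (fun z : Vec n =>
      ⟪gradient f yk, z⟫_ℝ + lam * ∑ i, p * (|xk i| + εk i) ^ (p - 1) * |z i|)
        + fun z => β / 2 * ‖z - yk‖ ^ 2 := by
    funext z
    simp only [subObj, Pi.add_apply]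
    ring
  have h := (uniformConvexOn_zero.2 hconv).add (strongConvexOn_univ_sq_norm_sub β yk)
  rw [zero_add] at h
  rwa [hsplit]

lemma Fobj_zero_le {n : ℕ} {p lam : ℝ} {f : Vec n → ℝ} (hp : 0 ≤ p) (hlam : 0 ≤ lam)
    (z : Vec n) {ε : Fin n → ℝ} (hε : ∀ i, 0 ≤ ε i) :
    Fobj n p lam f z 0 ≤ Fobj n p lam f z ε := by
  unfold Fobj
  gcongr with i <;> simp [hε i]

lemma le_Fobj {n : ℕ} {p lam : ℝ} {f : Vec n → ℝ} (hlam : 0 ≤ lam) (z : Vec n)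
    {ε : Fin n → ℝ} (hε : ∀ i, 0 ≤ ε i) : f z ≤ Fobj n p lam f z ε := by
  unfold Fobj
  have : 0 ≤ ∑ i, (|z i| + ε i) ^ p := Finset.sum_nonneg fun i _ =>
    Real.rpow_nonneg (add_nonneg (abs_nonneg _) (hε i)) _
  nlinarith

namespace EIRL1

variable {n : ℕ} {p lam β Lf μ αbar : ℝ} {f : Vec n → ℝ} {x y : ℕ → Vec n}
  {ε : ℕ → Fin n → ℝ} {α : ℕ → ℝ}

lemma eps_pos (H : EIRL1 n p lam β Lf μ αbar f x y ε α) : ∀ k i, 0 < ε k i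
  | 0, i => H.hε0 i
  | k + 1, i => H.hεpos k i

lemma eps_succ_le (H : EIRL1 n p lam β Lf μ αbar f x y ε α) (k : ℕ) (i : Fin n) :
    ε (k + 1) i ≤ ε k i :=
  (H.hεdec k i).trans (mul_le_of_le_one_left (H.eps_pos k i).le H.hμ1.le)

lemma beta_pos (H : EIRL1 n p lam β Lf μ αbar f x y ε α) : 0 < β :=
  H.hLf.trans_lt H.hβ

lemma decrease_coeff_pos (H : EIRL1 n p lam β Lf μ αbar f x y ε α) :
    0 < β / 2 * (1 - αbar ^ 2) :=
  mul_pos (by linarith [H.beta_pos]) (by nlinarith [H.hαbar0, H.hαbar1])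

lemma subObj_add_sq_le (H : EIRL1 n p lam β Lf μ αbar f x y ε α) (k : ℕ) (z : Vec n) :
    subObj n p lam β f (x k) (y k) (ε k) (x (k + 1)) + β / 2 * ‖z - x (k + 1)‖ ^ 2 ≤
      subObj n p lam β f (x k) (y k) (ε k) z := by
  have hmin : IsMinOn (subObj n p lam β f (x k) (y k) (ε k)) univ (x (k + 1)) :=
    isMinOn_univ_iff.2 fun z => by
      rcases eq_or_ne z (x (k + 1)) with rfl | hz
      exacts [le_rfl, (H.hmin k z hz).le]
  exact (strongConvexOn_subObj H.hp0.le H.hlam.le fun i => (H.eps_pos k i).le).add_sq_le_of_isMinOn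
    hmin (mem_univ _) (mem_univ z)

lemma norm_sub_y_le (H : EIRL1 n p lam β Lf μ αbar f x y ε α) (k : ℕ) :
    ‖x k - y k‖ ≤ αbar * ‖x k - x (k - 1)‖ := by
  rw [H.hy k, sub_add_cancel_left, norm_neg, norm_smul, Real.norm_of_nonneg (H.hα0 k)]
  exact mul_le_mul_of_nonneg_right (H.hα1 k) (norm_nonneg _)

/-- By concavity of `t ↦ t ^ p` the penalty lies below its linearisation at `xᵏ`, whose slopes are
the weights `wᵏ`; the smoothing parameters only decrease. -/
lemma sum_rpow_succ_le (H : EIRL1 n p lam β Lf μ αbar f x y ε α) (k : ℕ) :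
    ∑ i, (|x (k + 1) i| + ε (k + 1) i) ^ p ≤ ∑ i, (|x k i| + ε k i) ^ p
      + ∑ i, p * (|x k i| + ε k i) ^ (p - 1) * |x (k + 1) i|
      - ∑ i, p * (|x k i| + ε k i) ^ (p - 1) * |x k i| := by
  rw [← Finset.sum_add_distrib, ← Finset.sum_sub_distrib]
  refine Finset.sum_le_sum fun i _ => ?_
  have ha : 0 < |x k i| + ε k i := add_pos_of_nonneg_of_pos (abs_nonneg _) (H.eps_pos k i)
  have hw : 0 ≤ p * (|x k i| + ε k i) ^ (p - 1) := mul_nonneg H.hp0.le (Real.rpow_nonneg ha.le _)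
  have htangent := Real.rpow_le_rpow_add_mul_sub H.hp0.le H.hp1.le ha
    (add_nonneg (abs_nonneg (x (k + 1) i)) (H.eps_pos (k + 1) i).le)
  nlinarith [H.eps_succ_le k i]

lemma Fobj_succ_add_le (H : EIRL1 n p lam β Lf μ αbar f x y ε α) (k : ℕ) :
    Fobj n p lam f (x (k + 1)) (ε (k + 1)) + β / 2 * ‖x (k + 1) - x k‖ ^ 2 ≤
      Fobj n p lam f (x k) (ε k) + β / 2 * ‖x k - y k‖ ^ 2 := by
  have hsub := H.subObj_add_sq_le k (x k)
  have hdescent := le_add_inner_gradient_add_sq_of_lipschitz (H.hdiff.differentiable one_ne_zero)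
    H.hlip (y k) (x (k + 1))
  have hconv := H.hconv.add_inner_gradient_le (H.hdiff.differentiable one_ne_zero (y k)) (x k)
  have hpen := mul_le_mul_of_nonneg_left (H.sum_rpow_succ_le k) H.hlam.le
  have hL : Lf / 2 * ‖x (k + 1) - y k‖ ^ 2 ≤ β / 2 * ‖x (k + 1) - y k‖ ^ 2 := by
    gcongr; exact H.hβ.le
  rw [inner_sub_right] at hdescent hconv
  rw [norm_sub_rev (x k)] at hsub
  simp only [subObj] at hsub
  simp only [Fobj]
  linarith

lemma psiObj_succ_add_le (H : EIRL1 n p lam β Lf μ αbar f x y ε α) (k : ℕ) :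
    psiObj n p lam β f (x (k + 1)) (x k) (ε (k + 1))
        + β / 2 * (1 - αbar ^ 2) * ‖x k - x (k - 1)‖ ^ 2 ≤
      psiObj n p lam β f (x k) (x (k - 1)) (ε k) := by
  have hy : ‖x k - y k‖ ^ 2 ≤ αbar ^ 2 * ‖x k - x (k - 1)‖ ^ 2 := by
    rw [← mul_pow]; gcongr; exact H.norm_sub_y_le k
  have := H.Fobj_succ_add_le k
  have := H.beta_pos
  unfold psiObj
  nlinarith

lemma psiObj_le (H : EIRL1 n p lam β Lf μ αbar f x y ε α) :
    ∀ k, psiObj n p lam β f (x k) (x (k - 1)) (ε k) ≤ Fobj n p lam f (x 0) (ε 0)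
  | 0 => by simp [psiObj]
  | k + 1 => by
    show psiObj n p lam β f (x (k + 1)) (x k) (ε (k + 1)) ≤ _
    nlinarith [H.psiObj_succ_add_le k, H.psiObj_le k, H.decrease_coeff_pos,
      sq_nonneg ‖x k - x (k - 1)‖]

lemma bddBelow_psiObj (H : EIRL1 n p lam β Lf μ αbar f x y ε α) :
    BddBelow (range fun k => psiObj n p lam β f (x k) (x (k - 1)) (ε k)) := by
  obtain ⟨M, hM⟩ := H.hlevel.isCompact_closure.bddBelow_image H.hdiff.continuous.continuousOn
  refine ⟨M, forall_mem_range.2 fun k => ?_⟩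
  have hε : ∀ i, 0 ≤ ε k i := fun i => (H.eps_pos k i).le
  have hψ : Fobj n p lam f (x k) (ε k) ≤ psiObj n p lam β f (x k) (x (k - 1)) (ε k) :=
    le_add_of_nonneg_right (by have := H.beta_pos; positivity)
  have hlevel : Fobj n p lam f (x k) 0 ≤ Fobj n p lam f (x 0) (ε 0) :=
    (Fobj_zero_le H.hp0.le H.hlam.le _ hε).trans (hψ.trans (H.psiObj_le k))
  calc M ≤ f (x k) := hM (mem_image_of_mem f (subset_closure hlevel))
    _ ≤ Fobj n p lam f (x k) (ε k) := le_Fobj H.hlam.le _ hε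
    _ ≤ _ := hψ

end EIRL1

/-- Lemma 2.1(iii): the successive differences vanish. -/
theorem stmt_2 (n : ℕ) (p lam β Lf μ αbar : ℝ) (f : Vec n → ℝ)
    (x y : ℕ → Vec n) (ε : ℕ → Fin n → ℝ) (α : ℕ → ℝ)
    (H : EIRL1 n p lam β Lf μ αbar f x y ε α) :
    Tendsto (fun k => ‖x (k + 1) - x k‖) atTop (nhds 0) := by
  have hδ := H.decrease_coeff_pos
  have hsq : Tendsto (fun k => β / 2 * (1 - αbar ^ 2) * ‖x (k + 1) - x k‖ ^ 2) atTop (𝓝 0) :=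
    tendsto_zero_of_add_le_of_bddBelow (fun k => by positivity)
      (fun k => H.psiObj_succ_add_le (k + 1))
      (H.bddBelow_psiObj.mono (range_comp_subset_range (· + 1) _))
  have hnorm_sq := hsq.const_mul (β / 2 * (1 - αbar ^ 2))⁻¹
  simp only [← mul_assoc, inv_mul_cancel₀ hδ.ne', one_mul, mul_zero] at hnorm_sq
  simpa [Real.sqrt_sq (norm_nonneg _)] using hnorm_sq.sqrt
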